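/- If f : ℝ → ℝ is 1-periodic, continuously differentiable, and ∫₀¹ f(x) dx = a₀/2, then for every ε > 0 and every x, f(x)² ≤ ((ε+2)/24) ∫₀¹ f'(y)² dy + ((ε+2)/(4ε)) a₀². -/

import Mathlib

/-!
Integrating `(y - x - 1/2) f'(y)` by parts over one period `[x, x + 1]` gives `f x - ∫₀¹ f`
(the single-trapezoid error), so Cauchy–Schwarz together with `∫₀¹ (y - 1/2)² = 1/12` yields
`(f x - a₀/2)² ≤ (1/12) ∫₀¹ f'²`. Writing `f x = (f x - a₀/2) + a₀/2` and using
`(u + v)² ≤ (1 + t) u² + (1 + 1/t) v²` with `t = ε/2` gives the bound.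
-/

open MeasureTheory intervalIntegral Set

theorem sq_integral_mul_le_integral_sq_mul_integral_sq {α : Type*} [MeasurableSpace α]
    {μ : Measure α} {g h : α → ℝ} (hg : Integrable (fun x ↦ g x ^ 2) μ)
    (hh : Integrable (fun x ↦ h x ^ 2) μ) (hgh : Integrable (fun x ↦ g x * h x) μ) :
    (∫ x, g x * h x ∂μ) ^ 2 ≤ (∫ x, g x ^ 2 ∂μ) * ∫ x, h x ^ 2 ∂μ := by
  have hquad : ∀ t : ℝ, 0 ≤ (∫ x, g x ^ 2 ∂μ) * (t * t) + 2 * (∫ x, g x * h x ∂μ) * t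
      + ∫ x, h x ^ 2 ∂μ := by
    intro t
    have hexpand : ∫ x, (t * g x + h x) ^ 2 ∂μ = (∫ x, g x ^ 2 ∂μ) * (t * t)
        + 2 * (∫ x, g x * h x ∂μ) * t + ∫ x, h x ^ 2 ∂μ := by
      have hpt : ∀ x, (t * g x + h x) ^ 2 = (t * t) * g x ^ 2 + (2 * t) * (g x * h x) + h x ^ 2 :=
        fun x ↦ by ring
      simp only [hpt]
      have hg' : Integrable (fun x ↦ (t * t) * g x ^ 2) μ := hg.const_mul _
      have hgh' : Integrable (fun x ↦ (2 * t) * (g x * h x)) μ := hgh.const_mul _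
      have hsum : Integrable (fun x ↦ (t * t) * g x ^ 2 + (2 * t) * (g x * h x)) μ :=
        hg'.add hgh'
      rw [integral_add hsum hh, integral_add hg' hgh', MeasureTheory.integral_const_mul,
        MeasureTheory.integral_const_mul]
      ring
    exact hexpand ▸ integral_nonneg fun x ↦ sq_nonneg _
  have := discrim_le_zero hquad
  rw [discrim] at this
  linarith

theorem intervalIntegral.sq_integral_mul_le_integral_sq_mul_integral_sq {μ : Measure ℝ}
    {g h : ℝ → ℝ} {a b : ℝ} (hg : IntervalIntegrable (fun x ↦ g x ^ 2) μ a b)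
    (hh : IntervalIntegrable (fun x ↦ h x ^ 2) μ a b)
    (hgh : IntervalIntegrable (fun x ↦ g x * h x) μ a b) :
    (∫ x in a..b, g x * h x ∂μ) ^ 2 ≤ (∫ x in a..b, g x ^ 2 ∂μ) * ∫ x in a..b, h x ^ 2 ∂μ := by
  rw [← sq_abs, abs_intervalIntegral_eq, sq_abs, intervalIntegral_eq_integral_uIoc,
    intervalIntegral_eq_integral_uIoc (fun x ↦ h x ^ 2)]
  have hsign : (if a ≤ b then 1 else -1 : ℝ) * (if a ≤ b then 1 else -1 : ℝ) = 1 := by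
    split_ifs <;> norm_num
  rw [smul_eq_mul, smul_eq_mul, mul_mul_mul_comm, hsign, one_mul]
  exact _root_.sq_integral_mul_le_integral_sq_mul_integral_sq
    (intervalIntegrable_iff.mp hg) (intervalIntegrable_iff.mp hh) (intervalIntegrable_iff.mp hgh)

theorem integral_sub_midpoint_sq (a b : ℝ) :
    ∫ y in a..b, (y - (a + b) / 2) ^ 2 = (b - a) ^ 3 / 12 := by
  rw [intervalIntegral.integral_comp_sub_right (fun y ↦ y ^ 2), integral_pow]
  ring

theorem sq_trapezoidal_error_one_le {f f' : ℝ → ℝ} {a b : ℝ}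
    (hf : ∀ y ∈ uIcc a b, HasDerivAt f (f' y) y) (hf' : ContinuousOn f' (uIcc a b)) :
    trapezoidal_error f 1 a b ^ 2 ≤ (b - a) ^ 3 / 12 * ∫ y in a..b, f' y ^ 2 := by
  have hkernel : ContinuousOn (fun y : ℝ ↦ y - (a + b) / 2) (uIcc a b) := by fun_prop
  have hparts : ∫ y in a..b, (y - (a + b) / 2) * f' y
      = (b - a) / 2 * (f a + f b) - ∫ y in a..b, f y := by
    rw [integral_mul_deriv_eq_deriv_mul (fun y _ ↦ (hasDerivAt_id' y).sub_const _) hf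
      intervalIntegrable_const hf'.intervalIntegrable]
    simp only [one_mul]
    ring
  rw [trapezoidal_error, trapezoidal_integral_one, ← hparts, ← integral_sub_midpoint_sq]
  exact intervalIntegral.sq_integral_mul_le_integral_sq_mul_integral_sq
    (hkernel.pow 2).intervalIntegrable (hf'.pow 2).intervalIntegrable
    (hkernel.mul hf').intervalIntegrable

theorem Function.Periodic.deriv {f : ℝ → ℝ} {T : ℝ} (hf : Function.Periodic f T) :
    Function.Periodic (_root_.deriv f) T := fun x ↦ by
  rw [← deriv_comp_add_const, show (fun y ↦ f (y + T)) = f from funext hf]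

theorem Function.Periodic.sq_mul_sub_integral_le {f : ℝ → ℝ} {T : ℝ} (hf : ContDiff ℝ 1 f)
    (hper : Function.Periodic f T) (x : ℝ) :
    (T * f x - ∫ y in 0..T, f y) ^ 2 ≤ T ^ 3 / 12 * ∫ y in 0..T, _root_.deriv f y ^ 2 := by
  have h := sq_trapezoidal_error_one_le (a := x) (b := x + T)
    (fun y _ ↦ (hf.differentiable one_ne_zero y).hasDerivAt)
    (hf.continuous_deriv le_rfl).continuousOn
  have hper' : Function.Periodic (fun y ↦ _root_.deriv f y ^ 2) T :=
    hper.deriv.comp (fun t : ℝ ↦ t ^ 2)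
  rwa [trapezoidal_error, trapezoidal_integral_one, hper x, add_sub_cancel_left,
    hper.intervalIntegral_add_eq x 0, hper'.intervalIntegral_add_eq x 0, zero_add,
    ← two_mul, ← mul_assoc, div_mul_cancel₀ _ two_ne_zero] at h

theorem add_sq_le_one_add_mul_sq_add_one_add_inv_mul_sq {t : ℝ} (ht : 0 < t) (u v : ℝ) :
    (u + v) ^ 2 ≤ (1 + t) * u ^ 2 + (1 + t⁻¹) * v ^ 2 := by
  have hsq : 0 ≤ (t * u - v) ^ 2 / t := by positivity
  have hexp : (1 + t) * u ^ 2 + (1 + t⁻¹) * v ^ 2 - (u + v) ^ 2 = (t * u - v) ^ 2 / t := by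
    field_simp
    ring
  linarith

theorem sq_le_sobolev_type_bound
    (f : ℝ → ℝ) (a₀ : ℝ) (hf : ContDiff ℝ 1 f) (hper : Function.Periodic f 1)
    (hmean : ∫ x in (0:ℝ)..1, f x = a₀ / 2) :
    ∀ ε > (0:ℝ), ∀ x : ℝ,
      (f x) ^ 2 ≤ ((ε + 2) / 24) * (∫ y in (0:ℝ)..1, (deriv f y) ^ 2)
        + ((ε + 2) / (4 * ε)) * a₀ ^ 2 := by
  intro ε hε x
  have hosc := hper.sq_mul_sub_integral_le hf x
  rw [one_mul, hmean, one_pow] at hosc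
  calc f x ^ 2 = ((f x - a₀ / 2) + a₀ / 2) ^ 2 := by rw [sub_add_cancel]
    _ ≤ (1 + ε / 2) * (f x - a₀ / 2) ^ 2 + (1 + (ε / 2)⁻¹) * (a₀ / 2) ^ 2 :=
        add_sq_le_one_add_mul_sq_add_one_add_inv_mul_sq (half_pos hε) _ _
    _ ≤ (1 + ε / 2) * (1 / 12 * ∫ y in (0:ℝ)..1, deriv f y ^ 2)
        + (1 + (ε / 2)⁻¹) * (a₀ / 2) ^ 2 := by gcongr
    _ = _ := by field_simp; ring
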